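/- arXiv:2409.06317 — 3 statements merged into one kernel-verified Lean document; each statement's English description precedes it below -/
import Mathlib

section
/- Error-Invariant Commutativity Lemma: Let W₀, W₁, U₁ be unitaries on H_m ⊗ H_t ⊗ H_s ⊗ H_o where W₁ and U₁ act as identity on H_s, and W₀ is the swap of registers m and t (identity on H_s ⊗ H_o). Fix a ∈ {0,1}^ℓ and define on H_a ⊗ H_m ⊗ H_t ⊗ H_s ⊗ H_o: W := |a⟩⟨a| ⊗ W₁ + Σ_{a'≠a} |a'⟩⟨a'| ⊗ W₀; W̃ := |a⟩⟨a| ⊗ I + Σ_{a'≠a} |a'⟩⟨a'| ⊗ W₀; U := |a⟩⟨a| ⊗ U₁ + Σ_{a'≠a} |a'⟩⟨a'| ⊗ I. Let S be any linear operator acting nontrivially only on H_a ⊗ H_s. Given any family of (possibly sub-normalized) vectors {|ρ^{in}_{a'}⟩}_{a' ∈ {0,1}^ℓ} on H_{mtso}, define |η^{in}₀⟩ := |a⟩|ρ^{in}_a⟩ + Σ_{a'≠a} |a'⟩ W₀U₁†W₁† |ρ^{in}_{a'}⟩ and |η^{in}₁⟩ := |a⟩|ρ^{in}_a⟩ + Σ_{a'≠a}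 |a'⟩ W₀ |ρ^{in}_{a'}⟩, and set |η^{out}₀⟩ := W U S U† W† |η^{in}₀⟩ and |η^{out}₁⟩ := W̃ S W̃† |η^{in}₁⟩. Then there exists a family {|ρ^{out}_{a'}⟩}_{a'} such that |η^{out}₀⟩ = |a⟩|ρ^{out}_a⟩ + Σ_{a'≠a} |a'⟩ W₀U₁†W₁† |ρ^{out}_{a'}⟩ and |η^{out}₁⟩ = |a⟩|ρ^{out}_a⟩ + Σ_{a'≠a} |a'⟩ W₀ |ρ^{out}_{a'}⟩. -/
noncomputable section
open Matrix
set_option linter.unusedSectionVars false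

/-- The `a`-register: `ℓ` qubits. -/
abbrev AReg (ℓ : ℕ) := Fin ℓ → Bool

/-- The `(m, t, s, o)` registers (with `m` and `t` isomorphic). -/
abbrev KReg (M S O : Type*) := M × M × S × O

/-- The full space `H_a ⊗ H_m ⊗ H_t ⊗ H_s ⊗ H_o`. -/
abbrev JReg (ℓ : ℕ) (M S O : Type*) := AReg ℓ × KReg M S O

variable {ℓ : ℕ} {M S O : Type*} [Fintype M] [DecidableEq M]
  [Fintype S] [DecidableEq S] [Fintype O] [DecidableEq O]

/-- Lift of an operator on `H_m ⊗ H_t ⊗ H_o` to `H_m ⊗ H_t ⊗ H_s ⊗ H_o`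
(acting as the identity on `H_s`). -/
def liftMTO (B : Matrix (M × M × O) (M × M × O) ℂ) :
    Matrix (KReg M S O) (KReg M S O) ℂ :=
  Matrix.of fun p q =>
    if p.2.2.1 = q.2.2.1 then B (p.1, p.2.1, p.2.2.2) (q.1, q.2.1, q.2.2.2) else 0

/-- `W₀`: the swap of the registers `m` and `t` (identity on `H_s ⊗ H_o`). -/
def W₀ : Matrix (KReg M S O) (KReg M S O) ℂ :=
  Matrix.of fun p q => if p = (q.2.1, q.1, q.2.2) then 1 else 0

/-- An operator on the full space controlled on the `a`-register. -/
def ctrlA (F : AReg ℓ → Matrix (KReg M S O) (KReg M S O) ℂ) :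
    Matrix (JReg ℓ M S O) (JReg ℓ M S O) ℂ :=
  Matrix.of fun p q => if p.1 = q.1 then F q.1 p.2 q.2 else 0

/-- Lift of an operator on `H_a ⊗ H_s` to the full space
(acting nontrivially only on the `a` and `s` registers). -/
def liftAS (T : Matrix (AReg ℓ × S) (AReg ℓ × S) ℂ) :
    Matrix (JReg ℓ M S O) (JReg ℓ M S O) ℂ :=
  Matrix.of fun p q =>
    if p.2.1 = q.2.1 ∧ p.2.2.1 = q.2.2.1 ∧ p.2.2.2.2 = q.2.2.2.2 then
      T (p.1, p.2.2.2.1) (q.1, q.2.2.2.1) else 0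

/-- `W := |a⟩⟨a| ⊗ W₁ + ∑_{a'≠a} |a'⟩⟨a'| ⊗ W₀`. -/
def Wfull (a : AReg ℓ) (W₁' : Matrix (M × M × O) (M × M × O) ℂ) :
    Matrix (JReg ℓ M S O) (JReg ℓ M S O) ℂ :=
  ctrlA fun a' => if a' = a then liftMTO W₁' else W₀

/-- `W̃ := |a⟩⟨a| ⊗ I + ∑_{a'≠a} |a'⟩⟨a'| ⊗ W₀`. -/
def Wtfull (a : AReg ℓ) : Matrix (JReg ℓ M S O) (JReg ℓ M S O) ℂ :=
  ctrlA fun a' => if a' = a then 1 else W₀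

/-- `U := |a⟩⟨a| ⊗ U₁ + ∑_{a'≠a} |a'⟩⟨a'| ⊗ I`. -/
def Ufull (a : AReg ℓ) (U₁' : Matrix (M × M × O) (M × M × O) ℂ) :
    Matrix (JReg ℓ M S O) (JReg ℓ M S O) ℂ :=
  ctrlA fun a' => if a' = a then liftMTO U₁' else 1

/-- `|η₀⟩ := |a⟩|ρ_a⟩ + ∑_{a'≠a} |a'⟩ W₀U₁†W₁† |ρ_{a'}⟩`. -/
def etaZero (a : AReg ℓ) (W₁' U₁' : Matrix (M × M × O) (M × M × O) ℂ)
    (ρ : AReg ℓ → KReg M S O → ℂ) : JReg ℓ M S O → ℂ :=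
  fun p => if p.1 = a then ρ a p.2
    else (((W₀ * (liftMTO U₁')ᴴ * (liftMTO W₁')ᴴ :
      Matrix (KReg M S O) (KReg M S O) ℂ)).mulVec (ρ p.1)) p.2

/-- `|η₁⟩ := |a⟩|ρ_a⟩ + ∑_{a'≠a} |a'⟩ W₀ |ρ_{a'}⟩`. -/
def etaOne (a : AReg ℓ) (ρ : AReg ℓ → KReg M S O → ℂ) : JReg ℓ M S O → ℂ :=
  fun p => if p.1 = a then ρ a p.2 else (W₀.mulVec (ρ p.1)) p.2

/-! ### Auxiliary machinery -/

open Kronecker in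
private def eK : KReg M S O ≃ (M × M × O) × S where
  toFun p := ((p.1, p.2.1, p.2.2.2), p.2.2.1)
  invFun x := (x.1.1, x.1.2.1, x.2, x.1.2.2)
  left_inv _ := rfl
  right_inv _ := rfl

open Kronecker in
lemma liftMTO_eq (B : Matrix (M × M × O) (M × M × O) ℂ) :
    (liftMTO B : Matrix (KReg M S O) (KReg M S O) ℂ)
      = (B ⊗ₖ (1 : Matrix S S ℂ)).submatrix eK eK := by
  ext p q
  simp [liftMTO, eK, Matrix.one_apply, mul_ite, mul_one, mul_zero]

open Kronecker in
lemma liftMTO_mul (A B : Matrix (M × M × O) (M × M × O) ℂ) :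
    (liftMTO A * liftMTO B : Matrix (KReg M S O) (KReg M S O) ℂ) = liftMTO (A * B) := by
  simp [liftMTO_eq, Matrix.submatrix_mul_equiv, ← Matrix.mul_kronecker_mul]

lemma liftMTO_one : (liftMTO 1 : Matrix (KReg M S O) (KReg M S O) ℂ) = 1 := by
  ext p q
  simp only [liftMTO, Matrix.one_apply, Matrix.of_apply, Prod.ext_iff]
  aesop

lemma liftMTO_conjTranspose (B : Matrix (M × M × O) (M × M × O) ℂ) :
    (liftMTO B : Matrix (KReg M S O) (KReg M S O) ℂ)ᴴ = liftMTO Bᴴ := by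
  ext p q
  simp only [liftMTO, Matrix.conjTranspose_apply, Matrix.of_apply]
  split <;> split <;> simp_all [eq_comm]

lemma W₀_mul_W₀ : (W₀ * W₀ : Matrix (KReg M S O) (KReg M S O) ℂ) = 1 := by
  ext p q
  simp only [W₀, Matrix.mul_apply, Matrix.of_apply, Matrix.one_apply]
  rw [Finset.sum_eq_single (q.2.1, q.1, q.2.2)] <;> aesop

lemma W₀_conjTranspose : (W₀ : Matrix (KReg M S O) (KReg M S O) ℂ)ᴴ = W₀ := by
  ext p q
  simp only [W₀, Matrix.conjTranspose_apply, Matrix.of_apply, Prod.ext_iff]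
  split <;> split <;> simp_all

lemma ctrlA_mul (F G : AReg ℓ → Matrix (KReg M S O) (KReg M S O) ℂ) :
    (ctrlA F * ctrlA G : Matrix (JReg ℓ M S O) (JReg ℓ M S O) ℂ)
      = ctrlA fun a' => F a' * G a' := by
  ext p q
  simp only [ctrlA, Matrix.mul_apply, Matrix.of_apply]
  rw [Fintype.sum_prod_type]
  rw [Finset.sum_eq_single p.1]
  · by_cases h : p.1 = q.1 <;> simp [h]
  · intro b _ hb
    simp [Ne.symm hb]
  · simp

lemma ctrlA_conjTranspose (F : AReg ℓ → Matrix (KReg M S O) (KReg M S O) ℂ) :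
    (ctrlA F : Matrix (JReg ℓ M S O) (JReg ℓ M S O) ℂ)ᴴ = ctrlA fun a' => (F a')ᴴ := by
  ext p q
  simp only [ctrlA, Matrix.conjTranspose_apply, Matrix.of_apply]
  split <;> split <;> simp_all [eq_comm]

lemma ctrlA_one : (ctrlA (fun _ => 1) : Matrix (JReg ℓ M S O) (JReg ℓ M S O) ℂ) = 1 := by
  ext p q
  simp only [ctrlA, Matrix.one_apply, Matrix.of_apply, Prod.ext_iff]
  aesop

lemma ctrlA_mulVec (F : AReg ℓ → Matrix (KReg M S O) (KReg M S O) ℂ)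
    (v : JReg ℓ M S O → ℂ) (p : JReg ℓ M S O) :
    (ctrlA F).mulVec v p = (F p.1).mulVec (fun k => v (p.1, k)) p.2 := by
  simp only [ctrlA, Matrix.mulVec, dotProduct, Matrix.of_apply]
  rw [Fintype.sum_prod_type]
  rw [Finset.sum_eq_single p.1]
  · simp
  · intro b _ hb
    simp [Ne.symm hb]
  · simp

open Kronecker in
private def eJ : JReg ℓ M S O ≃ (AReg ℓ × S) × (M × M × O) where
  toFun p := ((p.1, p.2.2.2.1), (p.2.1, p.2.2.1, p.2.2.2.2))
  invFun x := (x.1.1, x.2.1, x.2.2.1, x.1.2, x.2.2.2)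
  left_inv _ := rfl
  right_inv _ := rfl

open Kronecker in
lemma liftAS_eq (T : Matrix (AReg ℓ × S) (AReg ℓ × S) ℂ) :
    (liftAS T : Matrix (JReg ℓ M S O) (JReg ℓ M S O) ℂ)
      = (T ⊗ₖ (1 : Matrix (M × M × O) (M × M × O) ℂ)).submatrix eJ eJ := by
  ext p q
  simp only [liftAS, eJ, Matrix.submatrix_apply, kroneckerMap_apply, Matrix.one_apply,
    Matrix.of_apply, Equiv.coe_fn_mk, mul_ite, mul_one, mul_zero, Prod.mk.injEq]

open Kronecker in
lemma ctrlA_const_liftMTO_eq (B : Matrix (M × M × O) (M × M × O) ℂ) :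
    (ctrlA (fun _ => liftMTO B) : Matrix (JReg ℓ M S O) (JReg ℓ M S O) ℂ)
      = ((1 : Matrix (AReg ℓ × S) (AReg ℓ × S) ℂ) ⊗ₖ B).submatrix eJ eJ := by
  ext p q
  simp only [ctrlA, liftMTO, eJ, Matrix.submatrix_apply, kroneckerMap_apply, Matrix.one_apply,
    Matrix.of_apply, Equiv.coe_fn_mk, ite_mul, one_mul, zero_mul, Prod.mk.injEq]
  aesop

open Kronecker in
lemma liftAS_comm (T : Matrix (AReg ℓ × S) (AReg ℓ × S) ℂ)
    (B : Matrix (M × M × O) (M × M × O) ℂ) :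
    (liftAS T * ctrlA (fun _ => liftMTO B) : Matrix (JReg ℓ M S O) (JReg ℓ M S O) ℂ)
      = ctrlA (fun _ => liftMTO B) * liftAS T := by
  simp only [liftAS_eq, ctrlA_const_liftMTO_eq, Matrix.submatrix_mul_equiv,
    ← Matrix.mul_kronecker_mul, Matrix.one_mul, Matrix.mul_one]

/-- The correction operator `Q`. -/
def Qmat (a : AReg ℓ) (W₁' U₁' : Matrix (M × M × O) (M × M × O) ℂ) :
    Matrix (JReg ℓ M S O) (JReg ℓ M S O) ℂ :=
  ctrlA fun a' => if a' = a then 1 else W₀ * (liftMTO U₁')ᴴ * (liftMTO W₁')ᴴ * W₀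

lemma cancel_left {n : Type*} [Fintype n] [DecidableEq n]
    {A B : Matrix n n ℂ} (h : A * B = 1) (X : Matrix n n ℂ) :
    A * (B * X) = X := by rw [← mul_assoc, h, one_mul]

/-- `η₀` is obtained from `η₁` by applying `Q`. -/
lemma etaZero_eq_Q_mulVec (a : AReg ℓ)
    (W₁' U₁' : Matrix (M × M × O) (M × M × O) ℂ)
    (ρ : AReg ℓ → KReg M S O → ℂ) :
    etaZero a W₁' U₁' ρ = (Qmat a W₁' U₁' : Matrix (JReg ℓ M S O) (JReg ℓ M S O) ℂ).mulVec
      (etaOne a ρ) := by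
  funext p
  rw [Qmat, ctrlA_mulVec]
  by_cases hp : p.1 = a
  · simp [etaZero, etaOne, hp, Matrix.one_mulVec]
  · have hslice : (fun k => etaOne a ρ (p.1, k)) = W₀.mulVec (ρ p.1) := by
      funext k; simp [etaOne, hp]
    simp only [etaZero, hp, if_neg, if_false, hslice, Matrix.mulVec_mulVec]
    congr 1
    rw [mul_assoc (W₀ * (liftMTO U₁')ᴴ * (liftMTO W₁')ᴴ), W₀_mul_W₀, mul_one]

/-- **Error-Invariant Commutativity Lemma.** -/
theorem stmt3 (a : AReg ℓ)
    (W₁' U₁' : Matrix (M × M × O) (M × M × O) ℂ)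
    (hW₁ : W₁' ∈ Matrix.unitaryGroup (M × M × O) ℂ)
    (hU₁ : U₁' ∈ Matrix.unitaryGroup (M × M × O) ℂ)
    (S' : Matrix (AReg ℓ × S) (AReg ℓ × S) ℂ)
    (ρin : AReg ℓ → KReg M S O → ℂ) :
    ∃ ρout : AReg ℓ → KReg M S O → ℂ,
      ((Wfull a W₁' * Ufull a U₁' * liftAS S' * (Ufull a U₁')ᴴ * (Wfull a W₁')ᴴ :
          Matrix (JReg ℓ M S O) (JReg ℓ M S O) ℂ)).mulVec
          (etaZero a W₁' U₁' ρin) = etaZero a W₁' U₁' ρout ∧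
      ((Wtfull a * liftAS S' * (Wtfull a)ᴴ :
          Matrix (JReg ℓ M S O) (JReg ℓ M S O) ℂ)).mulVec (etaOne a ρin) = etaOne a ρout := by
  classical
  -- unitarity at the level of lifted matrices
  have hW1 : W₁'ᴴ * W₁' = 1 := by
    have := hW₁.1; rwa [Matrix.star_eq_conjTranspose] at this
  have hW2 : W₁' * W₁'ᴴ = 1 := by
    have := hW₁.2; rwa [Matrix.star_eq_conjTranspose] at this
  have hU1 : U₁'ᴴ * U₁' = 1 := by
    have := hU₁.1; rwa [Matrix.star_eq_conjTranspose] at this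
  have hU2 : U₁' * U₁'ᴴ = 1 := by
    have := hU₁.2; rwa [Matrix.star_eq_conjTranspose] at this
  have eW1 : ((liftMTO W₁')ᴴ * liftMTO W₁' : Matrix (KReg M S O) (KReg M S O) ℂ) = 1 := by
    rw [liftMTO_conjTranspose, liftMTO_mul, hW1, liftMTO_one]
  have eW2 : (liftMTO W₁' * (liftMTO W₁')ᴴ : Matrix (KReg M S O) (KReg M S O) ℂ) = 1 := by
    rw [liftMTO_conjTranspose, liftMTO_mul, hW2, liftMTO_one]
  have eU1 : ((liftMTO U₁')ᴴ * liftMTO U₁' : Matrix (KReg M S O) (KReg M S O) ℂ) = 1 := by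
    rw [liftMTO_conjTranspose, liftMTO_mul, hU1, liftMTO_one]
  have eU2 : (liftMTO U₁' * (liftMTO U₁')ᴴ : Matrix (KReg M S O) (KReg M S O) ℂ) = 1 := by
    rw [liftMTO_conjTranspose, liftMTO_mul, hU2, liftMTO_one]
  -- the auxiliary operators
  set Q : Matrix (JReg ℓ M S O) (JReg ℓ M S O) ℂ := Qmat a W₁' U₁' with hQdef
  set D : Matrix (JReg ℓ M S O) (JReg ℓ M S O) ℂ := ctrlA fun _ => liftMTO (W₁' * U₁') with hDdef
  -- key identity : W * U = Q * W̃ * D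
  have hWU : Wfull a W₁' * Ufull a U₁' = Q * Wtfull a * D := by
    rw [hQdef, hDdef, Wfull, Ufull, Wtfull, Qmat, ctrlA_mul, ctrlA_mul, ctrlA_mul]
    refine congrArg ctrlA (funext fun a' => ?_)
    by_cases h : a' = a
    · simp only [h, if_pos, one_mul, liftMTO_mul]
    · simp only [h, if_neg, if_false, mul_one]
      rw [← liftMTO_mul]
      simp only [mul_assoc]
      rw [cancel_left W₀_mul_W₀, cancel_left eW1, eU1, mul_one]
  -- Q is unitary
  have hQ1 : Qᴴ * Q = 1 := by
    rw [hQdef, Qmat, ctrlA_conjTranspose, ctrlA_mul]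
    have hb : (W₀ * (liftMTO U₁')ᴴ * (liftMTO W₁')ᴴ * W₀ :
        Matrix (KReg M S O) (KReg M S O) ℂ)ᴴ *
        (W₀ * (liftMTO U₁')ᴴ * (liftMTO W₁')ᴴ * W₀) = 1 := by
      simp only [Matrix.conjTranspose_mul, W₀_conjTranspose, Matrix.conjTranspose_conjTranspose]
      simp only [mul_assoc]
      rw [cancel_left W₀_mul_W₀, cancel_left eU2, cancel_left eW2, W₀_mul_W₀]
    have hfun : (fun a' => (if a' = a then (1 : Matrix (KReg M S O) (KReg M S O) ℂ)
          else W₀ * (liftMTO U₁')ᴴ * (liftMTO W₁')ᴴ * W₀)ᴴ *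
          (if a' = a then 1 else W₀ * (liftMTO U₁')ᴴ * (liftMTO W₁')ᴴ * W₀))
        = fun _ => (1 : Matrix (KReg M S O) (KReg M S O) ℂ) := by
      funext a'
      by_cases h : a' = a
      · simp [h]
      · simp only [h, if_neg, if_false]
        exact hb
    rw [hfun, ctrlA_one]
  -- D is unitary
  have hD2 : D * Dᴴ = 1 := by
    rw [hDdef, ctrlA_conjTranspose, ctrlA_mul]
    have hb : (liftMTO (W₁' * U₁') : Matrix (KReg M S O) (KReg M S O) ℂ) *
        (liftMTO (W₁' * U₁'))ᴴ = 1 := by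
      rw [liftMTO_conjTranspose, liftMTO_mul, Matrix.conjTranspose_mul]
      have : W₁' * U₁' * (U₁'ᴴ * W₁'ᴴ) = 1 := by
        simp only [mul_assoc]
        rw [cancel_left hU2, hW2]
      rw [this, liftMTO_one]
    rw [show (fun a' : AReg ℓ => (liftMTO (W₁' * U₁') : Matrix (KReg M S O) (KReg M S O) ℂ) *
        (liftMTO (W₁' * U₁'))ᴴ) = fun _ => 1 from funext fun _ => hb, ctrlA_one]
  -- D commutes with liftAS S'
  have hDS : liftAS S' * D = D * liftAS S' := by
    rw [hDdef]; exact liftAS_comm S' (W₁' * U₁')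
  have hDSX : ∀ X : Matrix (JReg ℓ M S O) (JReg ℓ M S O) ℂ,
      D * (liftAS S' * X) = liftAS S' * (D * X) := fun X => by
    rw [← mul_assoc, ← hDS, mul_assoc]
  -- conjugation identity
  have hA : Wfull a W₁' * Ufull a U₁' * liftAS S' * (Ufull a U₁')ᴴ * (Wfull a W₁')ᴴ
      = Q * (Wtfull a * liftAS S' * (Wtfull a)ᴴ) * Qᴴ := by
    rw [mul_assoc (Wfull a W₁' * Ufull a U₁' * liftAS S'), ← Matrix.conjTranspose_mul, hWU]
    simp only [Matrix.conjTranspose_mul]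
    simp only [mul_assoc]
    rw [hDSX, cancel_left hD2]
  -- construct the output family
  set η1out : JReg ℓ M S O → ℂ :=
    (Wtfull a * liftAS S' * (Wtfull a)ᴴ :
      Matrix (JReg ℓ M S O) (JReg ℓ M S O) ℂ).mulVec (etaOne a ρin) with hη
  set ρout : AReg ℓ → KReg M S O → ℂ := fun a' => if a' = a then (fun k => η1out (a, k))
    else W₀.mulVec (fun k => η1out (a', k)) with hρdef
  have hout : etaOne a ρout = η1out := by
    funext p
    by_cases hp : p.1 = a
    · subst hp
      simp [etaOne, hρdef]
    · simp [etaOne, hρdef, hp, Matrix.mulVec_mulVec, W₀_mul_W₀, Matrix.one_mulVec]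
  refine ⟨ρout, ?_, ?_⟩
  · rw [etaZero_eq_Q_mulVec, Matrix.mulVec_mulVec, hA, mul_assoc, hQ1, mul_one,
      ← Matrix.mulVec_mulVec, ← hη, etaZero_eq_Q_mulVec, hout, hQdef]
  · exact hout.symm
end
end

section
/- Let X be a finite set, ε ∈ [0,1], and let H_ε be a random function X → {0,1} where each value H_ε(x) is independently 1 with probability ε. Let H₀ be the all-zero function. Then for any quantum algorithm A making at most q quantum queries to its oracle, |Pr[A^{H_ε} = 1] − Pr[A^{H₀} = 1]| ≤ 8q²ε. -/
noncomputable section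
open Matrix
open scoped ComplexOrder

/-- Basis index for a quantum query algorithm: query register `X`, one-qubit answer
register, and workspace `Z`. -/
abbrev QJ (X Z : Type*) := X × Bool × Z

variable {X Z : Type*} [Fintype X] [DecidableEq X] [Fintype Z] [DecidableEq Z]

/-- The XOR query oracle `|x⟩|b⟩|z⟩ ↦ |x⟩|b ⊕ f(x)⟩|z⟩` for `f : X → {0,1}`. -/
def oracleM (f : X → Bool) : Matrix (QJ X Z) (QJ X Z) ℂ :=
  Matrix.of fun p q => if p = (q.1, xor q.2.1 (f q.1), q.2.2) then 1 else 0

/-- The full circuit `V_q · O · V_{q-1} · O ⋯ O · V_0` of a `q`-query algorithm. -/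
def circuit : ℕ → (ℕ → Matrix (QJ X Z) (QJ X Z) ℂ) → Matrix (QJ X Z) (QJ X Z) ℂ →
    Matrix (QJ X Z) (QJ X Z) ℂ
  | 0, V, _ => V 0
  | n + 1, V, O => V (n + 1) * O * circuit n V O

/-- The `ε`-Bernoulli density on Boolean functions: each value is independently `1`
with probability `ε`. -/
def bern (ε : ℝ) (f : X → Bool) : ℝ := ∏ x, if f x then ε else 1 - ε

/-- `Pr[A^f = 1]`: the algorithm runs the circuit on `ψ` with oracle `f` and finally
measures the POVM element `Mout`. -/
def accProb (q : ℕ) (V : ℕ → Matrix (QJ X Z) (QJ X Z) ℂ) (ψ : QJ X Z → ℂ)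
    (Mout : Matrix (QJ X Z) (QJ X Z) ℂ) (f : X → Bool) : ℝ :=
  (star ((circuit q V (oracleM f)).mulVec ψ) ⬝ᵥ
    Mout.mulVec ((circuit q V (oracleM f)).mulVec ψ)).re

/-!
The circuit is a sum over query paths: writing the oracle as `∑ₛ [f(x) = b] · Sel(x, b)` over
query–answer pairs `s = (x, b)`, the final state is `∑_w [f is consistent with w] · D_w ψ` over
paths `w` of `q` pairs. Hence `Pr[A^f = 1]` is a combination of indicators that `f` satisfies
at most `2q` constraints `f(x) = b`, and its expectation over `H_ε` is a polynomial `P(ε)` of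
degree at most `2q`, with values in `[0, 1]` on `[0, 1]` and `P(0) = Pr[A^{H₀} = 1]`.

The bound then follows from the endpoint Markov-type inequality `|P(ε) - P(0)| ≤ 2 d² ε` for
polynomials of degree `d` bounded by `1` on `[0, 1]`. After the substitution `y = 1 - 2ε` this is
`|P(y) - P(1)| ≤ 1 - T_d(y) ≤ d² (1 - y)`: for `y` between the first two Chebyshev extremal nodes,
Lagrange interpolation at these nodes writes `P(1) - P(y)` as a combination of the node values
with alternating signs, so it is maximised by `T_d`, which takes the values `±1` there. For
larger `ε` the trivial bound `2` suffices.
-/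

section Markov

open Polynomial Real

theorem Real.abs_sin_nat_mul_le (n : ℕ) (x : ℝ) : |sin (n * x)| ≤ n * |sin x| := by
  induction n with
  | zero => simp
  | succ n ih =>
    calc |sin ((n + 1 : ℕ) * x)| = |sin (n * x) * cos x + cos (n * x) * sin x| := by
          rw [← sin_add]; push_cast; ring_nf
      _ ≤ |sin (n * x)| * |cos x| + |cos (n * x)| * |sin x| := by
          rw [← abs_mul, ← abs_mul]; exact abs_add_le _ _
      _ ≤ |sin (n * x)| * 1 + 1 * |sin x| := by
          gcongr <;> exact abs_cos_le_one _
      _ ≤ (n + 1 : ℕ) * |sin x| := by push_cast; linarith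

theorem Lagrange.eval_basis {F ι : Type*} [Field F] [DecidableEq ι] (s : Finset ι) (v : ι → F)
    (i : ι) (x : F) :
    (Lagrange.basis s v i).eval x = ∏ j ∈ s.erase i, (x - v j) / (v i - v j) := by
  simp only [Lagrange.basis, Lagrange.basisDivisor, eval_prod, eval_mul, eval_C, eval_sub, eval_X]
  exact Finset.prod_congr rfl fun j _ => inv_mul_eq_div _ _

namespace Polynomial.Chebyshev

theorem one_sub_eval_T_real_le (n : ℕ) {y : ℝ} (hy : y ∈ Set.Icc (-1) 1) :
    1 - (T ℝ n).eval y ≤ n ^ 2 * (1 - y) := by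
  set s := arccos y / 2
  have hy : y = cos (2 * s) := by rw [mul_div_cancel₀ _ two_ne_zero, cos_arccos hy.1 hy.2]
  have hT : (T ℝ n).eval y = cos (2 * (n * s)) := by
    rw [hy, T_real_cos]; push_cast; ring_nf
  have one_sub_cos_two_mul (u : ℝ) : 1 - cos (2 * u) = 2 * sin u ^ 2 := by
    rw [cos_two_mul, cos_sq']; ring
  have hsin : sin (n * s) ^ 2 ≤ n ^ 2 * sin s ^ 2 := by
    simpa only [sq_abs, mul_pow] using pow_le_pow_left₀ (abs_nonneg _) (abs_sin_nat_mul_le n s) 2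
  rw [hT, hy, one_sub_cos_two_mul, one_sub_cos_two_mul]
  linarith

def endpointWeight (n : ℕ) (y : ℝ) (i : ℕ) : ℝ :=
  (if i = 0 then 1 else 0) - (Lagrange.basis (Finset.range (n + 1)) (node n) i).eval y

theorem sumNodes_endpointWeight {n : ℕ} {P : ℝ[X]} (hP : P.degree ≤ n) (y : ℝ) :
    sumNodes n (endpointWeight n y) P = P.eval 1 - P.eval y := by
  have hcard : P.degree < (Finset.range (n + 1)).card := by
    rw [Finset.card_range]
    exact hP.trans_lt (by exact_mod_cast Nat.lt_succ_self n)
  have hy := congrArg (eval y) (Lagrange.eq_interpolate (strictAntiOn_node n).injOn hcard)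
  rw [Lagrange.interpolate_apply, eval_finsetSum] at hy
  simp only [eval_mul, eval_C] at hy
  simp only [sumNodes, endpointWeight, mul_sub, Finset.sum_sub_distrib, mul_ite, mul_one,
    mul_zero, Finset.sum_ite_eq', node_eq_one, ← Nat.range_succ_eq_Iic, hy]
  simp only [Finset.mem_range, Nat.zero_lt_succ, if_true, mul_comm]

theorem node_le_node_one {n j : ℕ} (hj : j ≤ n) (hj0 : j ≠ 0) : node n j ≤ node n 1 := by
  rcases (Nat.one_le_iff_ne_zero.mpr hj0).eq_or_lt with rfl | h
  · rfl
  · exact (node_lt hj h).le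

theorem endpointWeight_zero_nonneg {n : ℕ} {y : ℝ} (hy : y ∈ Set.Icc (node n 1) 1) :
    0 ≤ endpointWeight n y 0 := by
  -- every factor `(y - xⱼ) / (1 - xⱼ)` of the Lagrange basis polynomial lies in `[0, 1]`
  have hfac : ∀ j ∈ (Finset.range (n + 1)).erase 0,
      (y - node n j) / (node n 0 - node n j) ∈ Set.Icc 0 1 := by
    intro j hj
    obtain ⟨hj0, hjn⟩ := Finset.mem_erase.mp hj
    have hjn := Nat.lt_succ_iff.mp (Finset.mem_range.mp hjn)
    have hpos : 0 < node n 0 - node n j := sub_pos.mpr (node_lt hjn (Nat.pos_of_ne_zero hj0))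
    rw [node_eq_one] at hpos ⊢
    exact ⟨div_nonneg (sub_nonneg.mpr ((node_le_node_one hjn hj0).trans hy.1)) hpos.le,
      (div_le_one hpos).mpr (by linarith [hy.2])⟩
  rw [endpointWeight, Lagrange.eval_basis, if_pos rfl, sub_nonneg]
  exact Finset.prod_le_one (fun j hj => (hfac j hj).1) (fun j hj => (hfac j hj).2)

theorem negOnePow_mul_endpointWeight_nonneg_of_pos {n i : ℕ} (hi : i ≤ n) (hi0 : 0 < i)
    {y : ℝ} (hy : y ∈ Set.Icc (node n 1) 1) : 0 ≤ (-1) ^ i * endpointWeight n y i := by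
  -- the numerator has exactly one nonpositive factor, `y - x₀`, and the denominator has
  -- the sign of `(-1) ^ i`
  have h0 : 0 ∈ (Finset.range (n + 1)).erase i :=
    Finset.mem_erase.mpr ⟨hi0.ne, Finset.mem_range.mpr n.succ_pos⟩
  have hnum : 0 ≤ ∏ j ∈ ((Finset.range (n + 1)).erase i).erase 0, (y - node n j) :=
    Finset.prod_nonneg fun j hj => by
      obtain ⟨hj0, hj⟩ := Finset.mem_erase.mp hj
      have hjn := Nat.lt_succ_iff.mp (Finset.mem_range.mp (Finset.mem_of_mem_erase hj))
      exact sub_nonneg.mpr ((node_le_node_one hjn hj0).trans hy.1)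
  have hden := zero_lt_prod_node_sub_node hi
  rw [endpointWeight, Lagrange.eval_basis, if_neg hi0.ne', Finset.prod_div_distrib,
    ← Finset.mul_prod_erase _ _ h0, node_eq_one]
  set N := ∏ j ∈ ((Finset.range (n + 1)).erase i).erase 0, (y - node n j)
  set D := ∏ j ∈ (Finset.range (n + 1)).erase i, (node n i - node n j)
  have hD : D ≠ 0 := by rintro hD; simp [hD] at hden
  have hsq : ((-1 : ℝ) ^ i) ^ 2 = 1 := by rw [← pow_mul, mul_comm, pow_mul]; norm_num
  have : (-1) ^ i * (0 - (y - 1) * N / D) = (1 - y) * N / ((-1) ^ i * D) := by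
    field_simp
    linear_combination (1 - y) * N * hsq
  rw [this]
  exact div_nonneg (mul_nonneg (by linarith [hy.2]) hnum) hden.le

theorem negOnePow_mul_endpointWeight_nonneg {n i : ℕ} (hi : i ≤ n) {y : ℝ}
    (hy : y ∈ Set.Icc (node n 1) 1) : 0 ≤ (-1) ^ i * endpointWeight n y i := by
  rcases Nat.eq_zero_or_pos i with rfl | hi0
  · simpa using endpointWeight_zero_nonneg hy
  · exact negOnePow_mul_endpointWeight_nonneg_of_pos hi hi0 hy

theorem abs_eval_sub_eval_one_le {n : ℕ} {P : ℝ[X]} (hdeg : P.degree ≤ n)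
    (hP : ∀ x ∈ Set.Icc (-1) 1, |P.eval x| ≤ 1) {y : ℝ} (hy : y ∈ Set.Icc (node n 1) 1) :
    |P.eval y - P.eval 1| ≤ 1 - (T ℝ n).eval y := by
  have hc (i : ℕ) (hi : i ≤ n) := negOnePow_mul_endpointWeight_nonneg hi hy
  have hT := sumNodes_endpointWeight (n := n) (P := T ℝ n) (by simp) y
  rw [T_eval_one] at hT
  have upper := sumNodes_le_sumNodes_T hc (P := -P) (by simpa only [eval_neg, abs_neg] using hP)
  have lower := sumNodes_le_sumNodes_T hc hP
  rw [sumNodes_endpointWeight (by rwa [degree_neg]), eval_neg, eval_neg, hT] at upper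
  rw [sumNodes_endpointWeight hdeg, hT] at lower
  exact abs_le.mpr ⟨by linarith, by linarith⟩

end Polynomial.Chebyshev

theorem Polynomial.abs_eval_sub_eval_zero_le {d : ℕ} {P : ℝ[X]} (hdeg : P.natDegree ≤ d)
    (hP : ∀ x ∈ Set.Icc (0 : ℝ) 1, |P.eval x| ≤ 1) {ε : ℝ} (hε : ε ∈ Set.Icc (0 : ℝ) 1) :
    |P.eval ε - P.eval 0| ≤ 2 * d ^ 2 * ε := by
  rcases eq_or_ne d 0 with rfl | hd
  · rw [eq_C_of_natDegree_eq_zero (Nat.le_zero.mp hdeg)]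
    simp
  set Q := P.comp (C (-2⁻¹) * Polynomial.X + C 2⁻¹)
  have hQ (y : ℝ) : Q.eval y = P.eval ((1 - y) / 2) := by
    simp only [Q, eval_comp, eval_add, eval_mul, eval_C, eval_X]; ring_nf
  by_cases hy : Chebyshev.node d 1 ≤ 1 - 2 * ε
  · have hQdeg : Q.degree ≤ d := by
      refine degree_le_of_natDegree_le (natDegree_comp_le.trans ?_)
      simpa using hdeg
    have hQbd (y : ℝ) (hy : y ∈ Set.Icc (-1) 1) : |Q.eval y| ≤ 1 := by
      rw [hQ]; exact hP _ ⟨by linarith [hy.2], by linarith [hy.1]⟩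
    calc |P.eval ε - P.eval 0| = |Q.eval (1 - 2 * ε) - Q.eval 1| := by
          rw [hQ, hQ]; norm_num
      _ ≤ 1 - (Chebyshev.T ℝ d).eval (1 - 2 * ε) :=
          Chebyshev.abs_eval_sub_eval_one_le hQdeg hQbd ⟨hy, by linarith [hε.1]⟩
      _ ≤ d ^ 2 * (1 - (1 - 2 * ε)) :=
          Chebyshev.one_sub_eval_T_real_le d ⟨by linarith [hε.2], by linarith [hε.1]⟩
      _ = 2 * d ^ 2 * ε := by ring
  · -- beyond the first node `ε > 1 / d ^ 2`, and the trivial bound `2` suffices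
    have hdpos : (0 : ℝ) < d := by positivity
    have hcos : cos (π / d) ≤ 1 - 2 / d ^ 2 := by
      have := cos_le_one_sub_mul_cos_sq (x := π / d) (by
        rw [abs_of_pos (by positivity)]
        exact div_le_self pi_pos.le (by exact_mod_cast Nat.one_le_iff_ne_zero.mpr hd))
      field_simp at this ⊢
      linarith
    have hεd : 1 ≤ d ^ 2 * ε := by
      simp only [Chebyshev.node, Nat.cast_one, one_mul, not_le] at hy
      have := hcos.trans_lt' hy
      field_simp at this ⊢
      linarith
    calc |P.eval ε - P.eval 0| ≤ |P.eval ε| + |P.eval 0| := abs_sub _ _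
      _ ≤ 2 := by linarith [hP ε hε, hP 0 ⟨le_rfl, zero_le_one⟩]
      _ ≤ 2 * d ^ 2 * ε := by linarith

end Markov

theorem Equiv.Perm.permMatrix_mem_unitaryGroup {n R : Type*} [DecidableEq n] [Fintype n]
    [CommRing R] [StarRing R] (σ : Equiv.Perm n) : σ.permMatrix R ∈ unitaryGroup n R := by
  rw [mem_unitaryGroup_iff', star_eq_conjTranspose, conjTranspose_permMatrix, ← permMatrix_mul,
    mul_inv_cancel, permMatrix_one]

theorem Matrix.star_mulVec_dotProduct_mulVec_of_mem_unitaryGroup {n : Type*} [Fintype n]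
    [DecidableEq n] {U : Matrix n n ℂ} (hU : U ∈ unitaryGroup n ℂ) (v : n → ℂ) :
    star (U *ᵥ v) ⬝ᵥ U *ᵥ v = star v ⬝ᵥ v := by
  rw [star_mulVec, dotProduct_mulVec, vecMul_vecMul, ← star_eq_conjTranspose,
    mem_unitaryGroup_iff'.mp hU, vecMul_one]

theorem Matrix.re_star_dotProduct_mulVec_mem_Icc {n : Type*} [Fintype n] [DecidableEq n]
    {M : Matrix n n ℂ} (hM : M.PosSemidef) (hM' : (1 - M).PosSemidef) {v : n → ℂ}
    (hv : star v ⬝ᵥ v = 1) : (star v ⬝ᵥ M *ᵥ v).re ∈ Set.Icc 0 1 := by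
  have h0 := Complex.nonneg_iff.mp (hM.dotProduct_mulVec_nonneg v)
  have h1 := Complex.nonneg_iff.mp (hM'.dotProduct_mulVec_nonneg v)
  rw [sub_mulVec, dotProduct_sub, one_mulVec, hv, Complex.sub_re, Complex.one_re] at h1
  exact ⟨h0.1, by linarith [h1.1]⟩

theorem Matrix.re_star_sum_dotProduct_mulVec_sum {ι n : Type*} [Fintype ι] [Fintype n]
    (M : Matrix n n ℂ) (r : ι → ℝ) (v : ι → n → ℂ) :
    (star (∑ i, (r i : ℂ) • v i) ⬝ᵥ M *ᵥ ∑ j, (r j : ℂ) • v j).re =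
      ∑ i, ∑ j, r i * r j * (star (v i) ⬝ᵥ M *ᵥ v j).re := by
  rw [star_sum, sum_dotProduct, Complex.re_sum]
  refine Finset.sum_congr rfl fun i _ => ?_
  rw [mulVec_sum, dotProduct_sum, Complex.re_sum]
  refine Finset.sum_congr rfl fun j _ => ?_
  rw [star_smul, Complex.star_def, Complex.conj_ofReal, mulVec_smul, smul_dotProduct,
    dotProduct_smul, smul_eq_mul, smul_eq_mul, Complex.re_ofReal_mul, Complex.re_ofReal_mul,
    mul_assoc]

section QueryCircuit

variable {α β : Type*}

def answerFlip (f : α → Bool) : Equiv.Perm (QJ α β) :=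
  Function.Involutive.toPerm (fun r => (r.1, xor r.2.1 (f r.1), r.2.2)) fun r => by simp

theorem oracleM_eq_permMatrix [DecidableEq α] [DecidableEq β] (f : α → Bool) :
    (oracleM f : Matrix (QJ α β) (QJ α β) ℂ) = (answerFlip f).permMatrix ℂ := by
  ext p r
  simp only [Equiv.Perm.permMatrix, PEquiv.toMatrix_apply, Equiv.toPEquiv_apply,
    Option.mem_some_iff, ← Equiv.eq_symm_apply]
  rfl

def querySel [DecidableEq α] [DecidableEq β] (s : α × Bool) : Matrix (QJ α β) (QJ α β) ℂ :=
  Matrix.of fun p r => if r.1 = s.1 ∧ p = (r.1, xor r.2.1 s.2, r.2.2) then 1 else 0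

def queryIndicator (f : α → Bool) (s : α × Bool) : ℝ := if f s.1 = s.2 then 1 else 0

theorem oracleM_eq_sum_querySel [Fintype α] [DecidableEq α] [DecidableEq β] (f : α → Bool) :
    (oracleM f : Matrix (QJ α β) (QJ α β) ℂ) = ∑ s, (queryIndicator f s : ℂ) • querySel s := by
  ext p r
  rw [Matrix.sum_apply, Finset.sum_eq_single (r.1, f r.1)]
  · simp [oracleM, querySel, queryIndicator]
  · rintro ⟨x, b⟩ _ hs
    by_cases hx : r.1 = x
    · subst hx
      simp [queryIndicator, Ne.symm (by simpa using hs : b ≠ f r.1)]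
    · simp [querySel, hx]
  · simp

def pathMat [Fintype α] [Fintype β] {κ : Type*} (V : ℕ → Matrix (QJ α β) (QJ α β) ℂ)
    (A : κ → Matrix (QJ α β) (QJ α β) ℂ) : (n : ℕ) → (Fin n → κ) → Matrix (QJ α β) (QJ α β) ℂ
  | 0, _ => V 0
  | n + 1, w => V (n + 1) * A (w 0) * pathMat V A n (Fin.tail w)

theorem circuit_sum_smul [Fintype α] [Fintype β] {κ : Type*} [Fintype κ]
    (V : ℕ → Matrix (QJ α β) (QJ α β) ℂ) (c : κ → ℂ) (A : κ → Matrix (QJ α β) (QJ α β) ℂ)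
    (n : ℕ) :
    circuit n V (∑ s, c s • A s) = ∑ w : Fin n → κ, (∏ i, c (w i)) • pathMat V A n w := by
  induction n with
  | zero => simp [circuit, pathMat]
  | succ n ih =>
    rw [circuit, ih, Finset.mul_sum _ _ (V (n + 1)), Finset.sum_mul_sum,
      ← (Fin.consEquiv fun _ => κ).sum_comp, Fintype.sum_prod_type]
    refine Finset.sum_congr rfl fun s _ => Finset.sum_congr rfl fun w _ => ?_
    simp [Fin.consEquiv, Fin.prod_univ_succ, pathMat, mul_smul_comm, smul_mul_assoc, smul_smul,
      mul_comm]

variable [Fintype α] [DecidableEq α] [Fintype β] [DecidableEq β]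

theorem oracleM_mem_unitaryGroup (f : α → Bool) :
    (oracleM f : Matrix (QJ α β) (QJ α β) ℂ) ∈ unitaryGroup (QJ α β) ℂ := by
  rw [oracleM_eq_permMatrix]
  exact (answerFlip f).permMatrix_mem_unitaryGroup

theorem circuit_mem_unitaryGroup {V : ℕ → Matrix (QJ α β) (QJ α β) ℂ}
    (hV : ∀ j, V j ∈ unitaryGroup (QJ α β) ℂ)
    {O : Matrix (QJ α β) (QJ α β) ℂ} (hO : O ∈ unitaryGroup (QJ α β) ℂ) (n : ℕ) :
    circuit n V O ∈ unitaryGroup (QJ α β) ℂ := by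
  induction n with
  | zero => exact hV 0
  | succ n ih => exact mul_mem (mul_mem (hV (n + 1)) hO) ih

theorem accProb_mem_Icc {q : ℕ} {V : ℕ → Matrix (QJ α β) (QJ α β) ℂ}
    (hV : ∀ j, V j ∈ unitaryGroup (QJ α β) ℂ) {ψ : QJ α β → ℂ} (hψ : star ψ ⬝ᵥ ψ = 1)
    {Mout : Matrix (QJ α β) (QJ α β) ℂ} (hM : Mout.PosSemidef) (hM' : (1 - Mout).PosSemidef)
    (f : α → Bool) :
    accProb q V ψ Mout f ∈ Set.Icc 0 1 := by
  have hU := circuit_mem_unitaryGroup hV (oracleM_mem_unitaryGroup f) q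
  exact re_star_dotProduct_mulVec_mem_Icc hM hM'
    (by rw [star_mulVec_dotProduct_mulVec_of_mem_unitaryGroup hU, hψ])

def pathOverlap (q : ℕ) (V : ℕ → Matrix (QJ α β) (QJ α β) ℂ) (ψ : QJ α β → ℂ)
    (Mout : Matrix (QJ α β) (QJ α β) ℂ) (w w' : Fin q → α × Bool) : ℝ :=
  (star (pathMat V querySel q w *ᵥ ψ) ⬝ᵥ Mout *ᵥ (pathMat V querySel q w' *ᵥ ψ)).re

theorem accProb_eq_sum_pathOverlap (q : ℕ) (V : ℕ → Matrix (QJ α β) (QJ α β) ℂ)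
    (ψ : QJ α β → ℂ) (Mout : Matrix (QJ α β) (QJ α β) ℂ) (f : α → Bool) :
    accProb q V ψ Mout f = ∑ w, ∑ w',
      (∏ i, queryIndicator f (Fin.append w w' i)) * pathOverlap q V ψ Mout w w' := by
  rw [accProb, oracleM_eq_sum_querySel, circuit_sum_smul, sum_mulVec]
  simp_rw [smul_mulVec, ← Complex.ofReal_prod]
  rw [re_star_sum_dotProduct_mulVec_sum]
  simp only [Fin.prod_univ_add, Fin.append_left, Fin.append_right, pathOverlap]

theorem sum_bern_mul_prod (ε : ℝ) (g : α → Bool → ℝ) :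
    ∑ f : α → Bool, bern ε f * ∏ x, g x (f x) =
      ∏ x, ∑ b : Bool, (if b then ε else 1 - ε) * g x b := by
  rw [Fintype.prod_sum]
  simp only [bern, ← Finset.prod_mul_distrib]

theorem sum_bern_mul_mem_Icc {ε : ℝ} (hε : ε ∈ Set.Icc (0 : ℝ) 1) {g : (α → Bool) → ℝ}
    (hg : ∀ f, g f ∈ Set.Icc 0 1) : ∑ f, bern ε f * g f ∈ Set.Icc 0 1 := by
  have hbern (f : α → Bool) : 0 ≤ bern ε f :=
    Finset.prod_nonneg fun x _ => by split <;> linarith [hε.1, hε.2]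
  have hsum : ∑ f : α → Bool, bern ε f = 1 := by
    simpa using sum_bern_mul_prod ε fun _ _ => (1 : ℝ)
  refine ⟨Finset.sum_nonneg fun f _ => mul_nonneg (hbern f) (hg f).1, ?_⟩
  calc ∑ f, bern ε f * g f ≤ ∑ f, bern ε f :=
        Finset.sum_le_sum fun f _ => mul_le_of_le_one_right (hbern f) (hg f).2
    _ = 1 := hsum

theorem sum_bern_zero_mul (g : (α → Bool) → ℝ) :
    ∑ f, bern 0 f * g f = g fun _ => false := by
  rw [Fintype.sum_eq_single fun _ => false]
  · simp [bern]
  · intro f hf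
    obtain ⟨x, hx⟩ : ∃ x, f x = true := by
      by_contra! h
      exact hf (funext fun x => by simpa using h x)
    rw [bern, Finset.prod_eq_zero (Finset.mem_univ x) (by simp [hx]), zero_mul]

open Polynomial in
def consistencyPoly {m : ℕ} (u : Fin m → α × Bool) : ℝ[X] :=
  ∏ x, ∑ b : Bool, (if b then Polynomial.X else 1 - Polynomial.X) *
    C (∏ i with (u i).1 = x, if b = (u i).2 then 1 else 0)

open Polynomial in
theorem eval_consistencyPoly {m : ℕ} (u : Fin m → α × Bool) (ε : ℝ) :
    (consistencyPoly u).eval ε = ∑ f, bern ε f * ∏ i, queryIndicator f (u i) := by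
  have hfiber (f : α → Bool) : ∏ i, queryIndicator f (u i) =
      ∏ x, ∏ i with (u i).1 = x, if f x = (u i).2 then 1 else 0 := by
    rw [← Finset.prod_fiberwise Finset.univ (fun i => (u i).1)]
    refine Finset.prod_congr rfl fun x _ => Finset.prod_congr rfl fun i hi => ?_
    rw [queryIndicator, (Finset.mem_filter.mp hi).2]
  simp_rw [hfiber]
  rw [sum_bern_mul_prod ε fun x b => ∏ i with (u i).1 = x, if b = (u i).2 then 1 else 0]
  simp [consistencyPoly, eval_prod, apply_ite (eval ε)]

open Finset Polynomial in
theorem natDegree_consistencyPoly_le {m : ℕ} (u : Fin m → α × Bool) :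
    (consistencyPoly u).natDegree ≤ m := by
  have hfactor (x : α) : (∑ b : Bool, (if b then Polynomial.X else 1 - Polynomial.X : ℝ[X]) *
      C (∏ i with (u i).1 = x, if b = (u i).2 then 1 else 0)).natDegree ≤
        #{i | (u i).1 = x} := by
    rcases Finset.eq_empty_or_nonempty {i | (u i).1 = x} with h | h
    · -- an unconstrained coordinate contributes the factor `X + (1 - X) = 1`
      simp [h]
    · refine le_trans ?_ (Finset.card_pos.mpr h)
      rw [Fintype.sum_bool]
      refine (natDegree_add_le _ _).trans (max_le ((natDegree_mul_C_le _ _).trans ?_)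
        ((natDegree_mul_C_le _ _).trans ?_))
      · simp
      · exact (natDegree_sub_le _ _).trans (by simp)
  calc (consistencyPoly u).natDegree ≤ ∑ x, #{i | (u i).1 = x} :=
        (natDegree_prod_le _ _).trans (Finset.sum_le_sum fun x _ => hfactor x)
    _ = m := by
        rw [← Finset.card_eq_sum_card_fiberwise fun i _ => Finset.mem_univ (u i).1]
        simp

open Polynomial in
def expectedAccPoly (q : ℕ) (V : ℕ → Matrix (QJ α β) (QJ α β) ℂ) (ψ : QJ α β → ℂ)
    (Mout : Matrix (QJ α β) (QJ α β) ℂ) : ℝ[X] :=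
  ∑ w, ∑ w', C (pathOverlap q V ψ Mout w w') * consistencyPoly (Fin.append w w')

open Polynomial in
theorem natDegree_expectedAccPoly_le (q : ℕ) (V : ℕ → Matrix (QJ α β) (QJ α β) ℂ)
    (ψ : QJ α β → ℂ) (Mout : Matrix (QJ α β) (QJ α β) ℂ) :
    (expectedAccPoly q V ψ Mout).natDegree ≤ q + q := by
  refine natDegree_sum_le_of_forall_le _ _ fun w _ =>
    natDegree_sum_le_of_forall_le _ _ fun w' _ => ?_
  exact (natDegree_C_mul_le _ _).trans (natDegree_consistencyPoly_le _)

open Polynomial in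
theorem eval_expectedAccPoly (q : ℕ) (V : ℕ → Matrix (QJ α β) (QJ α β) ℂ)
    (ψ : QJ α β → ℂ) (Mout : Matrix (QJ α β) (QJ α β) ℂ) (ε : ℝ) :
    (expectedAccPoly q V ψ Mout).eval ε = ∑ f, bern ε f * accProb q V ψ Mout f := by
  simp only [expectedAccPoly, eval_finsetSum, eval_mul, eval_C, eval_consistencyPoly,
    accProb_eq_sum_pathOverlap, Finset.mul_sum]
  rw [Finset.sum_comm (β := ℝ) (s := Finset.univ (α := α → Bool))]
  refine Finset.sum_congr rfl fun w _ => ?_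
  rw [Finset.sum_comm (β := ℝ) (s := Finset.univ (α := α → Bool))]
  exact Finset.sum_congr rfl fun w' _ => Finset.sum_congr rfl fun f _ => by ring

end QueryCircuit

/-- **Sparse-oracle indistinguishability (Hülsing–Rijneveld–Song).**
For any quantum algorithm making at most `q` quantum queries,
`|Pr[A^{H_ε} = 1] − Pr[A^{H₀} = 1]| ≤ 8q²ε`, where `H_ε` is a random function whose
values are independently `1` with probability `ε`, and `H₀` is the all-zero function. -/
theorem stmt8 (ε : ℝ) (hε0 : 0 ≤ ε) (hε1 : ε ≤ 1) (q : ℕ)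
    (V : ℕ → Matrix (QJ X Z) (QJ X Z) ℂ)
    (hV : ∀ j, V j ∈ Matrix.unitaryGroup (QJ X Z) ℂ)
    (ψ : QJ X Z → ℂ) (hψ : star ψ ⬝ᵥ ψ = 1)
    (Mout : Matrix (QJ X Z) (QJ X Z) ℂ)
    (hM : Mout.PosSemidef)
    (hM' : ((1 : Matrix (QJ X Z) (QJ X Z) ℂ) - Mout).PosSemidef) :
    |(∑ f : X → Bool, bern ε f * accProb q V ψ Mout f) -
        accProb q V ψ Mout (fun _ => false)| ≤ 8 * (q : ℝ) ^ 2 * ε := by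
  set P := expectedAccPoly q V ψ Mout
  have hP (x : ℝ) : P.eval x = ∑ f, bern x f * accProb q V ψ Mout f :=
    eval_expectedAccPoly q V ψ Mout x
  have hbound (x : ℝ) (hx : x ∈ Set.Icc (0 : ℝ) 1) : |P.eval x| ≤ 1 := by
    obtain ⟨h0, h1⟩ := hP x ▸ sum_bern_mul_mem_Icc hx (accProb_mem_Icc hV hψ hM hM')
    exact abs_le.mpr ⟨by linarith, h1⟩
  calc |(∑ f : X → Bool, bern ε f * accProb q V ψ Mout f) - accProb q V ψ Mout fun _ => false|
      = |P.eval ε - P.eval 0| := by rw [hP, hP, sum_bern_zero_mul]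
    _ ≤ 2 * ((q + q : ℕ) : ℝ) ^ 2 * ε :=
        Polynomial.abs_eval_sub_eval_zero_le (natDegree_expectedAccPoly_le q V ψ Mout) hbound
          ⟨hε0, hε1⟩
    _ = 8 * (q : ℝ) ^ 2 * ε := by push_cast; ring
end
end

section
/- Counter-structure invariant (single step, ↓-query case): Suppose the overall state before a non-special ↓-query at global counter i has the form |φ⟩ = |i⟩_gc |i⟩_lc |p₁,…,p_i⟩_{p₁…p_i} |ρ⟩ + |i⟩_gc Σ_{j=0}^{i−1} |j⟩_lc |p₁,…,p_j⟩ Σ_{p'_{j+1} ≠ p_{j+1}} |p'_{j+1}⟩_{p_{j+1}} |ρ_{p'_{j+1}}⟩. Let the query be answered by Ṽ = (controlled on lc = gc−1 after increment) D_{i+1}C_{i+1}B_{i+1}A_{i+1}U_gc and (otherwise) C'_{i+1}A_{i+1}U_gc, where: U_gc increments gc; A_{i+1} swaps m and p_{i+1}; B_{i+1}, C_{i+1}, D_{i+1} act as B_{i+1,1}, C_{i+1,1}, increment-lc respectively on the branch where registers p₁…p_{i+1} hold (p₁,…,p_{i+1}), and as I, C_{i+1,0}, I on other branches; C'_{i+1}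 swaps m and t_{i+1}; all the '1'-branch operators avoid registers p₁…p_{i+1}. Then after applying the simulator's local operator S (acting only on m, u, s) with projector |↓⟩⟨↓|_u followed by Ṽ, the resulting state again has the form |i+1⟩_gc |i+1⟩_lc |p₁,…,p_{i+1}⟩ |ρ'⟩ + |i+1⟩_gc Σ_{j=0}^{i} |j⟩_lc |p₁,…,p_j⟩ Σ_{p'_{j+1} ≠ p_{j+1}} |p'_{j+1}⟩ |ρ'_{p'_{j+1}}⟩ for some (sub-normalized) vectors |ρ'⟩, |ρ'_{p'_{j+1}}⟩. -/
noncomputable section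
open Matrix

/-- The registers of the interaction: global counter `gc`, local counter `lc`,
prover-message registers `ps = p₁…p_K`, message register `m`, trash registers
`ts = t₁…t_K`, verifier-message registers `vs = v₁…v_K`, the simulator's query-type
register `u` and workspace `s`, and the verifier's workspace `w`.
All message-type registers consist of `ℓ` qubits. -/
structure Reg (N K ℓ : ℕ) (S W : Type*) where
  gc : Fin N
  lc : Fin N
  ps : Fin K → (Fin ℓ → Bool)
  m : Fin ℓ → Bool
  ts : Fin K → (Fin ℓ → Bool)
  vs : Fin K → (Fin ℓ → Bool)
  u : Bool
  s : S
  w : W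
  deriving DecidableEq

variable {N K ℓ : ℕ} {S W : Type*}
  [Fintype S] [DecidableEq S] [Fintype W] [DecidableEq W]

/-- The registers form a finite-dimensional system. -/
def regEquiv : Reg N K ℓ S W ≃
    (Fin N × Fin N × (Fin K → Fin ℓ → Bool) × (Fin ℓ → Bool) ×
      (Fin K → Fin ℓ → Bool) × (Fin K → Fin ℓ → Bool) × Bool × S × W) where
  toFun x := (x.gc, x.lc, x.ps, x.m, x.ts, x.vs, x.u, x.s, x.w)
  invFun x := ⟨x.1, x.2.1, x.2.2.1, x.2.2.2.1, x.2.2.2.2.1, x.2.2.2.2.2.1,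
    x.2.2.2.2.2.2.1, x.2.2.2.2.2.2.2.1, x.2.2.2.2.2.2.2.2⟩
  left_inv _ := rfl
  right_inv _ := rfl

instance : Fintype (Reg N K ℓ S W) := Fintype.ofEquiv _ regEquiv.symm

/-- The permutation matrix sending basis state `b` to basis state `f b`. -/
def permM (f : Reg N K ℓ S W → Reg N K ℓ S W) :
    Matrix (Reg N K ℓ S W) (Reg N K ℓ S W) ℂ :=
  Matrix.of fun a b => if a = f b then 1 else 0

/-- `U_gc`: increment the global counter. -/
def Ugc [NeZero N] : Matrix (Reg N K ℓ S W) (Reg N K ℓ S W) ℂ :=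
  permM fun x => { x with gc := x.gc + 1 }

/-- `D_{k,1}`: increment the local counter. -/
def Ulc [NeZero N] : Matrix (Reg N K ℓ S W) (Reg N K ℓ S W) ℂ :=
  permM fun x => { x with lc := x.lc + 1 }

/-- `A_k`: swap the message register `m` with the prover-message register `p_k`. -/
def Aop (kf : Fin K) : Matrix (Reg N K ℓ S W) (Reg N K ℓ S W) ℂ :=
  permM fun x => { x with m := x.ps kf, ps := Function.update x.ps kf x.m }

/-- `C_{k,0}` (= `C'_k`): swap `m` with the trash register `t_k`. -/
def swapMT (kf : Fin K) : Matrix (Reg N K ℓ S W) (Reg N K ℓ S W) ℂ :=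
  permM fun x => { x with m := x.ts kf, ts := Function.update x.ts kf x.m }

/-- `C_{k,1}`: swap `m` with the verifier-message register `v_k`. -/
def swapMV (kf : Fin K) : Matrix (Reg N K ℓ S W) (Reg N K ℓ S W) ℂ :=
  permM fun x => { x with m := x.vs kf, vs := Function.update x.vs kf x.m }

/-- Registers `p₁ … p_{k+1}` hold the fixed strings `p₁ … p_{k+1}`. -/
def matchK (p : Fin K → (Fin ℓ → Bool)) (kf : Fin K) (x : Reg N K ℓ S W) : Prop :=
  ∀ j : Fin K, j ≤ kf → x.ps j = p j

instance (p : Fin K → (Fin ℓ → Bool)) (kf : Fin K) (x : Reg N K ℓ S W) :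
    Decidable (matchK p kf x) := by
  unfold matchK; infer_instance

/-- `C_k`: acts as `C_{k,1}` on the branch where `p₁…p_k` hold `(p₁,…,p_k)` and as
`C_{k,0}` on the other branches. -/
def Ck (p : Fin K → (Fin ℓ → Bool)) (kf : Fin K) :
    Matrix (Reg N K ℓ S W) (Reg N K ℓ S W) ℂ :=
  Matrix.of fun a b => if matchK p kf b then swapMV kf a b else swapMT kf a b

/-- Lift of `B_{k,1}` (the honest verifier's unitary, acting only on `v_k` and the
workspace `w`) to the full space. -/
def liftB (kf : Fin K) (B1 : Matrix ((Fin ℓ → Bool) × W) ((Fin ℓ → Bool) × W) ℂ) :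
    Matrix (Reg N K ℓ S W) (Reg N K ℓ S W) ℂ :=
  Matrix.of fun a b =>
    if a.gc = b.gc ∧ a.lc = b.lc ∧ a.ps = b.ps ∧ a.m = b.m ∧ a.ts = b.ts ∧
        (∀ j : Fin K, j ≠ kf → a.vs j = b.vs j) ∧ a.u = b.u ∧ a.s = b.s
    then B1 (a.vs kf, a.w) (b.vs kf, b.w) else 0

/-- `B_k`: acts as `B_{k,1}` on the matched branch and as the identity otherwise. -/
def Bk (p : Fin K → (Fin ℓ → Bool)) (kf : Fin K)
    (B1 : Matrix ((Fin ℓ → Bool) × W) ((Fin ℓ → Bool) × W) ℂ) :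
    Matrix (Reg N K ℓ S W) (Reg N K ℓ S W) ℂ :=
  Matrix.of fun a b =>
    if matchK p kf b then liftB kf B1 a b else (if a = b then (1 : ℂ) else 0)

/-- `D_k`: increments the local counter on the matched branch, identity otherwise. -/
def Dk [NeZero N] (p : Fin K → (Fin ℓ → Bool)) (kf : Fin K) :
    Matrix (Reg N K ℓ S W) (Reg N K ℓ S W) ℂ :=
  Matrix.of fun a b =>
    if matchK p kf b then Ulc a b else (if a = b then (1 : ℂ) else 0)

/-- Projector onto local-counter value `i`. -/
def PlcNat (i : ℕ) : Matrix (Reg N K ℓ S W) (Reg N K ℓ S W) ℂ :=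
  Matrix.diagonal fun x => if x.lc.1 = i then 1 else 0

/-- Projector `|↓⟩⟨↓|_u` onto the ↓ value of the query-type register. -/
def projDown : Matrix (Reg N K ℓ S W) (Reg N K ℓ S W) ℂ :=
  Matrix.diagonal fun x => if x.u = false then 1 else 0

/-- Lift of the simulator's local operator (acting only on `m`, `u`, `s`). -/
def simOp (S1 : Matrix ((Fin ℓ → Bool) × Bool × S) ((Fin ℓ → Bool) × Bool × S) ℂ) :
    Matrix (Reg N K ℓ S W) (Reg N K ℓ S W) ℂ :=
  Matrix.of fun a b =>
    if a.gc = b.gc ∧ a.lc = b.lc ∧ a.ps = b.ps ∧ a.ts = b.ts ∧ a.vs = b.vs ∧ a.w = b.w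
    then S1 (a.m, a.u, a.s) (b.m, b.u, b.s) else 0

/-- The verifier unitary `Ṽ` answering a (non-special) ↓-query at global counter `i`:
controlled on `lc = i` (i.e. `lc = gc − 1` after the increment) it applies
`D_{i+1} C_{i+1} B_{i+1} A_{i+1} U_gc`, otherwise `C'_{i+1} A_{i+1} U_gc`. -/
def Vtilde [NeZero N] (p : Fin K → (Fin ℓ → Bool)) (kf : Fin K)
    (B1 : Matrix ((Fin ℓ → Bool) × W) ((Fin ℓ → Bool) × W) ℂ) (i : ℕ) :
    Matrix (Reg N K ℓ S W) (Reg N K ℓ S W) ℂ :=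
  (Dk p kf * Ck p kf * Bk p kf B1 * Aop kf * Ugc) * PlcNat i +
    (swapMT kf * Aop kf * Ugc) * (1 - PlcNat i)

/-- The support predicate for the counter-structure invariant at global counter `i`:
either the good branch (`lc = i` and `p₁…p_i` hold `(p₁,…,p_i)`) or a bad branch
(`lc = j < i`, `p₁…p_j` hold `(p₁,…,p_j)` and `p_{j+1}` holds some `p' ≠ p_{j+1}`). -/
def ind (p : Fin K → (Fin ℓ → Bool)) (i : ℕ) (x : Reg N K ℓ S W) : Prop :=
  x.gc.1 = i ∧
    ((x.lc.1 = i ∧ ∀ j : Fin K, j.1 < i → x.ps j = p j) ∨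
      (x.lc.1 < i ∧ (∀ j : Fin K, j.1 < x.lc.1 → x.ps j = p j) ∧
        ∀ j : Fin K, j.1 = x.lc.1 → x.ps j ≠ p j))


section aux

lemma exists_ne_of_mul_apply_ne (A B : Matrix (Reg N K ℓ S W) (Reg N K ℓ S W) ℂ)
    {a c : Reg N K ℓ S W} (h : (A * B) a c ≠ 0) :
    ∃ b, A a b ≠ 0 ∧ B b c ≠ 0 := by
  rw [Matrix.mul_apply] at h
  obtain ⟨b, -, hb⟩ := Finset.exists_ne_zero_of_sum_ne_zero h
  exact ⟨b, left_ne_zero_of_mul hb, right_ne_zero_of_mul hb⟩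

lemma permM_eq {f : Reg N K ℓ S W → Reg N K ℓ S W} {a b : Reg N K ℓ S W}
    (h : permM f a b ≠ 0) : a = f b := by
  by_contra hc
  simp [permM, hc] at h

lemma val_add_one [NeZero N] {a : Fin N} (h : a.1 + 1 < N) : (a + 1).1 = a.1 + 1 := by
  have h1 : (1 : Fin N).1 = 1 := by
    simp [Fin.val_one', Nat.mod_eq_of_lt (show 1 < N by omega)]
  rw [Fin.val_add, h1, Nat.mod_eq_of_lt h]

lemma matchK_congr {p : Fin K → (Fin ℓ → Bool)} {kf : Fin K} {a b : Reg N K ℓ S W}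
    (h : a.ps = b.ps) : matchK p kf a ↔ matchK p kf b := by
  simp [matchK, h]

lemma liftB_support {kf : Fin K}
    {B1 : Matrix ((Fin ℓ → Bool) × W) ((Fin ℓ → Bool) × W) ℂ} {a b : Reg N K ℓ S W}
    (h : liftB kf B1 a b ≠ 0) : a.gc = b.gc ∧ a.lc = b.lc ∧ a.ps = b.ps := by
  simp only [liftB, Matrix.of_apply] at h
  by_cases hc : a.gc = b.gc ∧ a.lc = b.lc ∧ a.ps = b.ps ∧ a.m = b.m ∧ a.ts = b.ts ∧
      (∀ j : Fin K, j ≠ kf → a.vs j = b.vs j) ∧ a.u = b.u ∧ a.s = b.s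
  · exact ⟨hc.1, hc.2.1, hc.2.2.1⟩
  · rw [if_neg hc] at h; exact absurd rfl h

lemma Bk_support {p : Fin K → (Fin ℓ → Bool)} {kf : Fin K}
    {B1 : Matrix ((Fin ℓ → Bool) × W) ((Fin ℓ → Bool) × W) ℂ} {a b : Reg N K ℓ S W}
    (h : Bk p kf B1 a b ≠ 0) : a.gc = b.gc ∧ a.lc = b.lc ∧ a.ps = b.ps := by
  simp only [Bk, Matrix.of_apply] at h
  by_cases hm : matchK p kf b
  · rw [if_pos hm] at h
    exact liftB_support h
  · rw [if_neg hm] at h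
    by_cases hab : a = b
    · subst hab; exact ⟨rfl, rfl, rfl⟩
    · rw [if_neg hab] at h; exact absurd rfl h

lemma Ck_support {p : Fin K → (Fin ℓ → Bool)} {kf : Fin K} {a b : Reg N K ℓ S W}
    (h : Ck p kf a b ≠ 0) : a.gc = b.gc ∧ a.lc = b.lc ∧ a.ps = b.ps := by
  simp only [Ck, Matrix.of_apply] at h
  by_cases hm : matchK p kf b
  · rw [if_pos hm] at h
    unfold swapMV at h
    have := permM_eq h
    rw [this]; exact ⟨rfl, rfl, rfl⟩
  · rw [if_neg hm] at h
    unfold swapMT at h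
    have := permM_eq h
    rw [this]; exact ⟨rfl, rfl, rfl⟩

lemma Dk_support [NeZero N] {p : Fin K → (Fin ℓ → Bool)} {kf : Fin K} {a b : Reg N K ℓ S W}
    (h : Dk p kf a b ≠ 0) :
    a.gc = b.gc ∧ a.ps = b.ps ∧
      ((matchK p kf b ∧ a.lc = b.lc + 1) ∨ (¬ matchK p kf b ∧ a.lc = b.lc)) := by
  simp only [Dk, Matrix.of_apply] at h
  by_cases hm : matchK p kf b
  · rw [if_pos hm] at h
    unfold Ulc at h
    have := permM_eq h
    rw [this]
    exact ⟨rfl, rfl, Or.inl ⟨hm, rfl⟩⟩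
  · rw [if_neg hm] at h
    by_cases hab : a = b
    · subst hab; exact ⟨rfl, rfl, Or.inr ⟨hm, rfl⟩⟩
    · rw [if_neg hab] at h; exact absurd rfl h

lemma simOp_support {S1 : Matrix ((Fin ℓ → Bool) × Bool × S) ((Fin ℓ → Bool) × Bool × S) ℂ}
    {a b : Reg N K ℓ S W} (h : simOp S1 a b ≠ 0) :
    a.gc = b.gc ∧ a.lc = b.lc ∧ a.ps = b.ps := by
  simp only [simOp, Matrix.of_apply] at h
  by_cases hc : a.gc = b.gc ∧ a.lc = b.lc ∧ a.ps = b.ps ∧ a.ts = b.ts ∧ a.vs = b.vs ∧ a.w = b.w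
  · exact ⟨hc.1, hc.2.1, hc.2.2.1⟩
  · rw [if_neg hc] at h; exact absurd rfl h

lemma ind_congr {p : Fin K → (Fin ℓ → Bool)} {i : ℕ} {a b : Reg N K ℓ S W}
    (hgc : a.gc = b.gc) (hlc : a.lc = b.lc) (hps : a.ps = b.ps) :
    ind p i a ↔ ind p i b := by
  unfold ind; rw [hgc, hlc, hps]

lemma key_step [NeZero N] (i : ℕ) (hiK : i < K) (hiN : i + 1 < N)
    (p : Fin K → (Fin ℓ → Bool))
    (B1 : Matrix ((Fin ℓ → Bool) × W) ((Fin ℓ → Bool) × W) ℂ)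
    {x c : Reg N K ℓ S W} (hc : ind p i c)
    (hV : Vtilde p ⟨i, hiK⟩ B1 i x c ≠ 0) : ind p (i + 1) x := by
  set kf : Fin K := ⟨i, hiK⟩ with hkf
  have hgc : c.gc.1 = i := hc.1
  have hgcval : (c.gc + 1).1 = i + 1 := by
    have hlt : c.gc.1 + 1 < N := by omega
    rw [val_add_one hlt, hgc]
  by_cases hlc : c.lc.1 = i
  · -- good branch case
    have hps : ∀ j : Fin K, j.1 < i → c.ps j = p j := by
      rcases hc.2 with ⟨_, h⟩ | ⟨h, _⟩
      · exact h
      · omega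
    have hV1 : ((Dk p kf * Ck p kf * Bk p kf B1 * Aop kf * Ugc : Matrix (Reg N K ℓ S W) (Reg N K ℓ S W) ℂ)) x c ≠ 0 := by
      have heq : Vtilde p kf B1 i x c
          = ((Dk p kf * Ck p kf * Bk p kf B1 * Aop kf * Ugc : Matrix (Reg N K ℓ S W) (Reg N K ℓ S W) ℂ)) x c := by
        simp [Vtilde, Matrix.add_apply, Matrix.mul_sub, Matrix.sub_apply, Matrix.mul_one,
          PlcNat, Matrix.mul_diagonal, hlc]
      rwa [heq] at hV
    obtain ⟨g, hDCBA, hU⟩ := exists_ne_of_mul_apply_ne _ _ hV1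
    obtain ⟨f, hDCB, hA⟩ := exists_ne_of_mul_apply_ne _ _ hDCBA
    obtain ⟨e, hDC, hB⟩ := exists_ne_of_mul_apply_ne _ _ hDCB
    obtain ⟨d, hD, hC⟩ := exists_ne_of_mul_apply_ne _ _ hDC
    unfold Ugc at hU
    have hg := permM_eq hU
    unfold Aop at hA
    have hf := permM_eq hA
    obtain ⟨hBgc, hBlc, hBps⟩ := Bk_support hB
    obtain ⟨hCgc, hClc, hCps⟩ := Ck_support hC
    obtain ⟨hDgc, hDps, hDlc⟩ := Dk_support hD
    -- facts about f
    have hfgc : f.gc = c.gc + 1 := by rw [hf, hg]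
    have hflc : f.lc = c.lc := by rw [hf, hg]
    have hfps : f.ps = Function.update c.ps kf c.m := by rw [hf, hg]
    have hxgc : x.gc = c.gc + 1 := by rw [hDgc, hCgc, hBgc, hfgc]
    have hxps : x.ps = Function.update c.ps kf c.m := by rw [hDps, hCps, hBps, hfps]
    have hmd : matchK p kf d ↔ matchK p kf f :=
      matchK_congr (by rw [hCps, hBps])
    refine ⟨by rw [hxgc]; exact hgcval, ?_⟩
    by_cases hm : matchK p kf f
    · left
      have hxlc : x.lc = c.lc + 1 := by
        rcases hDlc with ⟨_, h⟩ | ⟨hn, _⟩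
        · rw [h, hClc, hBlc, hflc]
        · exact absurd (hmd.mpr hm) hn
      constructor
      · rw [hxlc, val_add_one (by omega), hlc]
      · intro j hj
        rw [hxps]
        by_cases hjk : j = kf
        · subst hjk
          rw [Function.update_self]
          have := hm kf le_rfl
          rw [hfps, Function.update_self] at this
          exact this
        · rw [Function.update_of_ne hjk]
          apply hps
          have : j.1 ≠ i := fun h => hjk (Fin.ext (by rw [h]))
          omega
    · right
      have hxlc : x.lc = c.lc := by
        rcases hDlc with ⟨hn, _⟩ | ⟨_, h⟩
        · exact absurd (hmd.mp hn) hm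
        · rw [h, hClc, hBlc, hflc]
      refine ⟨by omega, ?_, ?_⟩
      · intro j hj
        rw [hxlc] at hj
        rw [hxps, Function.update_of_ne (fun h => by subst h; simp [hkf] at hj; omega)]
        exact hps j (by omega)
      · intro j hj
        rw [hxlc, hlc] at hj
        have hjk : j = kf := Fin.ext (by rw [hj])
        subst hjk
        rw [hxps, Function.update_self]
        intro hcm
        apply hm
        intro j' hj'
        rw [hfps]
        by_cases hj'k : j' = kf
        · subst hj'k; rw [Function.update_self]; exact hcm
        · rw [Function.update_of_ne hj'k]
          apply hps
          have : j'.1 ≤ i := hj'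
          have : j'.1 ≠ i := fun h => hj'k (Fin.ext (by rw [h]))
          omega
  · -- bad branch case
    obtain ⟨hlt, hbelow, hat⟩ : c.lc.1 < i ∧ (∀ j : Fin K, j.1 < c.lc.1 → c.ps j = p j) ∧
        ∀ j : Fin K, j.1 = c.lc.1 → c.ps j ≠ p j := by
      rcases hc.2 with ⟨h, _⟩ | h
      · exact absurd h hlc
      · exact h
    have hV2 : ((swapMT kf * Aop kf * Ugc : Matrix (Reg N K ℓ S W) (Reg N K ℓ S W) ℂ)) x c ≠ 0 := by
      have heq : Vtilde p kf B1 i x c = ((swapMT kf * Aop kf * Ugc : Matrix (Reg N K ℓ S W) (Reg N K ℓ S W) ℂ)) x c := by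
        simp [Vtilde, Matrix.add_apply, Matrix.mul_sub, Matrix.sub_apply, Matrix.mul_one,
          PlcNat, Matrix.mul_diagonal, hlc]
      rwa [heq] at hV
    obtain ⟨g, hTA, hU⟩ := exists_ne_of_mul_apply_ne _ _ hV2
    obtain ⟨f, hT, hA⟩ := exists_ne_of_mul_apply_ne _ _ hTA
    unfold Ugc at hU
    have hg := permM_eq hU
    unfold Aop at hA
    have hf := permM_eq hA
    unfold swapMT at hT
    have hx := permM_eq hT
    have hxgc : x.gc = c.gc + 1 := by rw [hx, hf, hg]
    have hxlc : x.lc = c.lc := by rw [hx, hf, hg]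
    have hxps : x.ps = Function.update c.ps kf c.m := by rw [hx, hf, hg]
    refine ⟨by rw [hxgc]; exact hgcval, Or.inr ⟨by omega, ?_, ?_⟩⟩
    · intro j hj
      rw [hxlc] at hj
      rw [hxps, Function.update_of_ne (fun h => by subst h; simp [hkf] at hj; omega)]
      exact hbelow j hj
    · intro j hj
      rw [hxlc] at hj
      rw [hxps, Function.update_of_ne (fun h => by subst h; simp [hkf] at hj; omega)]
      exact hat j hj

end aux

/-- **Counter-structure invariant (single step, ↓-query case).**
If the overall state `φ` has the good/bad form at global counter `i`, then after the
simulator's local operator `S` (with the projector `|↓⟩⟨↓|_u`) followed by the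
verifier's unitary `Ṽ`, the resulting state again has the good/bad form at global
counter `i+1` (for some sub-normalized branch vectors), stated as a support
condition. -/
theorem stmt16 [NeZero N] (i : ℕ) (hiK : i < K) (hiN : i + 1 < N)
    (p : Fin K → (Fin ℓ → Bool))
    (B1 : Matrix ((Fin ℓ → Bool) × W) ((Fin ℓ → Bool) × W) ℂ)
    (hB1 : B1 ∈ Matrix.unitaryGroup ((Fin ℓ → Bool) × W) ℂ)
    (S1 : Matrix ((Fin ℓ → Bool) × Bool × S) ((Fin ℓ → Bool) × Bool × S) ℂ)
    (hS1 : S1 ∈ Matrix.unitaryGroup ((Fin ℓ → Bool) × Bool × S) ℂ)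
    (φ : Reg N K ℓ S W → ℂ)
    (hφ : ∀ x, ¬ ind p i x → φ x = 0) :
    ∀ x, ¬ ind p (i + 1) x →
      (((Vtilde p ⟨i, hiK⟩ B1 i * projDown * simOp S1 :
        Matrix (Reg N K ℓ S W) (Reg N K ℓ S W) ℂ)).mulVec φ) x = 0 := by
  intro x hx
  simp only [Matrix.mulVec, dotProduct]
  apply Finset.sum_eq_zero
  intro b _
  by_cases hb : ind p i b
  · have hM : (Vtilde p ⟨i, hiK⟩ B1 i * projDown * simOp S1 :
        Matrix (Reg N K ℓ S W) (Reg N K ℓ S W) ℂ) x b = 0 := by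
      rw [Matrix.mul_assoc, Matrix.mul_apply]
      apply Finset.sum_eq_zero
      intro c _
      by_cases hsim : simOp S1 c b = 0
      · have : (projDown * simOp S1 : Matrix (Reg N K ℓ S W) (Reg N K ℓ S W) ℂ) c b = 0 := by
          rw [projDown, Matrix.diagonal_mul, hsim, mul_zero]
        rw [this, mul_zero]
      · obtain ⟨hgc, hlc, hps⟩ := simOp_support hsim
        have hc : ind p i c := (ind_congr hgc hlc hps).mpr hb
        have hV : Vtilde p ⟨i, hiK⟩ B1 i x c = 0 := by
          by_contra hne
          exact hx (key_step i hiK hiN p B1 hc hne)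
        rw [hV, zero_mul]
    rw [hM, zero_mul]
  · rw [hφ b hb, mul_zero]
end
end
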